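/- Let K be a field and A = (α_{mn}) an M×N matrix with entries in T such that for all nonnegative integers U₁,…,U_N, V₁,…,V_M with U₁+⋯+U_N = V₁+⋯+V_M, the square matrix M_{U₁,…,U_N;V₁,…,V_M}(A) is nonsingular. Then A is strongly badly approximable. -/

import Mathlib

open scoped BigOperators Classical

noncomputable section

variable {K : Type*} [Field K]

/-- `x` as an element of `L = K((x⁻¹))`, realized as the Laurent series in `t = x⁻¹`
supported at the single exponent `-1`. -/
def xL (K : Type*) [Field K] : LaurentSeries K := HahnSeries.single (-1 : ℤ) 1

/-- The embedding of the polynomial ring `K[x]` into `L = K((x⁻¹))`. -/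
def toL (P : Polynomial K) : LaurentSeries K := Polynomial.aeval (xL K) P

/-- The absolute value on `L`: `|0| = 0` and `|F| = e^M` where `M` is the degree in `x`
of the leading term of `F` (i.e. `M = -(order of F as a series in t = x⁻¹)`). -/
def absL (F : LaurentSeries K) : ℝ := if F = 0 then 0 else Real.exp (-(F.order : ℝ))

/-- `‖F‖`, the distance from `F` to the nearest polynomial in `x`. -/
def normL (F : LaurentSeries K) : ℝ :=
  sInf { r : ℝ | ∃ P : Polynomial K, r = absL (F - toL P) }

/-- The solution space `V(U₁,…,U_N; V₁,…,V_M)` of the system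
`|ξ_n| < e^{U_n}` and `‖∑_n α_{mn} ξ_n‖ < e^{-V_m}`. -/
def VSet {M N : ℕ} (A : Matrix (Fin M) (Fin N) (LaurentSeries K))
    (U : Fin N → ℕ) (V : Fin M → ℕ) : Set (Fin N → Polynomial K) :=
  { ξ | (∀ n, absL (toL (ξ n)) < Real.exp (U n)) ∧
        (∀ m, normL (∑ n, A m n * toL (ξ n)) < Real.exp (-(V m : ℝ))) }

/-- `dim V(U₁,…,U_N; V₁,…,V_M)` as a `K`-vector space. -/
def dimV {M N : ℕ} (A : Matrix (Fin M) (Fin N) (LaurentSeries K))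
    (U : Fin N → ℕ) (V : Fin M → ℕ) : ℕ :=
  Module.finrank K (Submodule.span K (VSet A U V))

/-- An `M × N` matrix with entries in `T = L/K[x]` is strongly badly approximable if
there is `C₁ > 0` with `e^{-C₁} < (∏_m ‖∑_n α_{mn} ξ_n‖) (∏_n max(|ξ_n|,1))`
for all nonzero `ξ ∈ K[x]^N`. -/
def StronglyBadlyApproximable {M N : ℕ}
    (A : Matrix (Fin M) (Fin N) (LaurentSeries K)) : Prop :=
  ∃ C₁ : ℝ, 0 < C₁ ∧ ∀ ξ : Fin N → Polynomial K, ξ ≠ 0 →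
    Real.exp (-C₁) <
      (∏ m, normL (∑ n, A m n * toL (ξ n))) * (∏ n, max (absL (toL (ξ n))) 1)

/-- The `V × U` Hankel matrix `M_{U;V}(α)` with `(i,j)` entry `a_{i+j-1}` (1-indexed),
where `a_i` is the coefficient of `x^{-i}` in `α`. -/
def hankel (α : LaurentSeries K) (U V : ℕ) : Matrix (Fin V) (Fin U) K :=
  Matrix.of fun i j => α.coeff ((i : ℤ) + (j : ℤ) + 1)

/-- The block matrix `M_{U₁,…,U_N; V₁,…,V_M}(A)` whose `(m,n)` block is
`M_{U_n; V_m}(α_{mn})`. -/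
def blockM {M N : ℕ} (A : Matrix (Fin M) (Fin N) (LaurentSeries K))
    (U : Fin N → ℕ) (V : Fin M → ℕ) :
    Matrix ((m : Fin M) × Fin (V m)) ((n : Fin N) × Fin (U n)) K :=
  Matrix.of fun i j => hankel (A i.1 j.1) (U j.1) (V i.1) i.2 j.2

/-! For `ξ ≠ 0` put `Uₙ = deg ξₙ + 1` and let `cₘ` be the number of leading coefficients
(of `x⁻¹, x⁻², …`, counted up to `∑ₙ Uₙ`) that vanish in `Fₘ = ∑ₙ αₘₙ ξₙ`, so that
`‖Fₘ‖ ≥ e^{-(cₘ+1)}`. If `∑ₘ cₘ ≥ ∑ₙ Uₙ`, choose `Vₘ ≤ cₘ` with `∑ₘ Vₘ = ∑ₙ Uₙ`: the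
coefficients of `ξ` then form a nonzero kernel vector of the square matrix `M_{U;V}(A)`.
Hence `∑ₘ cₘ < ∑ₙ (deg ξₙ + 1)`, which is the required inequality with `C₁ = M + N + 1`. -/

open Polynomial Matrix

lemma toL_monomial (n : ℕ) (a : K) : toL (monomial n a) = HahnSeries.single (-(n : ℤ)) a := by
  have hC : algebraMap K (LaurentSeries K) a = HahnSeries.single 0 a := by
    rw [HahnSeries.algebraMap_apply', PowerSeries.algebraMap_apply, HahnSeries.ofPowerSeries_C,
      HahnSeries.C_apply, Algebra.algebraMap_self, RingHom.id_apply]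
  rw [toL, aeval_monomial, xL, HahnSeries.single_pow, hC, HahnSeries.single_mul_single]
  simp

lemma toL_coeff (P : K[X]) (k : ℤ) :
    (toL P).coeff k = if k ≤ 0 then P.coeff (-k).toNat else 0 := by
  induction P using Polynomial.induction_on' with
  | add p q hp hq =>
    rw [toL, map_add, ← toL, ← toL, HahnSeries.coeff_add, hp, hq]
    split <;> simp
  | monomial n a =>
    rw [toL_monomial, HahnSeries.coeff_single, coeff_monomial]
    split_ifs <;> first | rfl | omega

lemma toL_coeff_of_pos (P : K[X]) {k : ℤ} (hk : 0 < k) : (toL P).coeff k = 0 := by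
  rw [toL_coeff, if_neg (by omega)]

lemma toL_coeff_neg_natCast (P : K[X]) (d : ℕ) : (toL P).coeff (-(d : ℤ)) = P.coeff d := by
  rw [toL_coeff, if_pos (by omega), neg_neg, Int.toNat_natCast]

lemma toL_ne_zero {P : K[X]} (hP : P ≠ 0) : toL P ≠ 0 := fun h0 =>
  leadingCoeff_ne_zero.mpr hP <| by
    rw [leadingCoeff, ← toL_coeff_neg_natCast, h0, HahnSeries.coeff_zero]

lemma order_toL {P : K[X]} (hP : P ≠ 0) : (toL P).order = -(P.natDegree : ℤ) := by
  have hlead : (toL P).coeff (-(P.natDegree : ℤ)) ≠ 0 := by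
    rwa [toL_coeff_neg_natCast, ← leadingCoeff, leadingCoeff_ne_zero]
  refine le_antisymm (HahnSeries.order_le_of_coeff_ne_zero hlead) (not_lt.mp fun hlt => ?_)
  have horder := mt HahnSeries.coeff_order_eq_zero.mp (toL_ne_zero hP)
  rw [toL_coeff, if_pos (by omega)] at horder
  have := le_natDegree_of_ne_zero horder
  omega

lemma max_absL_toL_one (P : K[X]) : max (absL (toL P)) 1 = Real.exp P.natDegree := by
  by_cases hP : P = 0
  · simp [hP, toL, absL]
  · rw [absL, if_neg (toL_ne_zero hP), order_toL hP, max_eq_left] <;> push_cast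
    · simp
    · simp

/-- Subtracting a polynomial does not touch the coefficients of `x⁻ᵏ`, `k > 0`. -/
lemma exp_neg_le_normL {F : LaurentSeries K} {k : ℤ} (hk : 0 < k) (hF : F.coeff k ≠ 0) :
    Real.exp (-k) ≤ normL F := by
  refine le_csInf ⟨_, 0, rfl⟩ ?_
  rintro _ ⟨P, rfl⟩
  have hcoeff : (F - toL P).coeff k ≠ 0 := by
    rwa [HahnSeries.coeff_sub, toL_coeff_of_pos P hk, sub_zero]
  have hne : F - toL P ≠ 0 := fun h0 => hcoeff (by rw [h0, HahnSeries.coeff_zero])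
  rw [absL, if_neg hne, Real.exp_le_exp, neg_le_neg_iff, Int.cast_le]
  exact HahnSeries.order_le_of_coeff_ne_zero hcoeff

lemma coeff_mul_toL (α : LaurentSeries K) {P : K[X]} {U : ℕ} (hP : P.natDegree < U) (k : ℤ) :
    (α * toL P).coeff k = ∑ j ∈ Finset.range U, α.coeff (k + j) * P.coeff j := by
  have hsum : toL P = ∑ j ∈ Finset.range U, HahnSeries.single (-(j : ℤ)) (P.coeff j) := by
    conv_lhs => rw [P.as_sum_range' U hP, toL, map_sum]
    exact Finset.sum_congr rfl fun j _ => toL_monomial j _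
  rw [hsum, Finset.mul_sum, HahnSeries.coeff_sum]
  refine Finset.sum_congr rfl fun j _ => ?_
  rw [← HahnSeries.coeff_mul_single_add, add_neg_cancel_right]

lemma blockM_mulVec_coeff {M N : ℕ} (A : Matrix (Fin M) (Fin N) (LaurentSeries K))
    {U : Fin N → ℕ} (V : Fin M → ℕ) {ξ : Fin N → K[X]} (hU : ∀ n, (ξ n).natDegree < U n)
    (i : (m : Fin M) × Fin (V m)) :
    (blockM A U V *ᵥ fun j => (ξ j.1).coeff j.2) i =
      (∑ n, A i.1 n * toL (ξ n)).coeff ((i.2 : ℤ) + 1) := by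
  simp only [Matrix.mulVec, dotProduct, ← Finset.univ_sigma_univ, Finset.sum_sigma,
    HahnSeries.coeff_sum, coeff_mul_toL _ (hU _), blockM, hankel, Matrix.of_apply]
  refine Finset.sum_congr rfl fun n _ => ?_
  rw [Fin.sum_univ_eq_sum_range (fun j => (A i.1 n).coeff (i.2 + j + 1) * (ξ n).coeff j)]
  simp only [add_right_comm]

lemma Matrix.eq_zero_of_mulVec_eq_zero_of_rank_eq_card {m n R : Type*} [Fintype m] [Fintype n]
    [Field R] {B : Matrix m n R} (hB : B.rank = Fintype.card n) {v : n → R}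
    (hv : B *ᵥ v = 0) : v = 0 := by
  have hrn := B.mulVecLin.finrank_range_add_finrank_ker
  rw [← Matrix.rank, hB, Module.finrank_fintype_fun_eq_card] at hrn
  have hker : LinearMap.ker B.mulVecLin = ⊥ := Submodule.finrank_eq_zero.mp (by omega)
  exact LinearMap.ker_eq_bot'.mp hker v hv

/-- If all these coefficients vanished, the coefficients of `ξ` would form a nonzero kernel
vector of `blockM A U V`. -/
lemma exists_coeff_ne_zero_of_blockM_rank_eq {M N : ℕ}
    (A : Matrix (Fin M) (Fin N) (LaurentSeries K)) {U : Fin N → ℕ} {V : Fin M → ℕ}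
    (hrank : (blockM A U V).rank = ∑ n, U n) {ξ : Fin N → K[X]} (hξ : ξ ≠ 0)
    (hU : ∀ n, (ξ n).natDegree < U n) :
    ∃ m, ∃ i < V m, (∑ n, A m n * toL (ξ n)).coeff ((i : ℤ) + 1) ≠ 0 := by
  by_contra! hvanish
  refine hξ (funext fun n => Polynomial.ext fun j => ?_)
  rcases lt_or_ge j (U n) with hj | hj
  · have hker : (blockM A U V *ᵥ fun j => (ξ j.1).coeff j.2) = 0 :=
      funext fun i => (blockM_mulVec_coeff A V hU i).trans (hvanish i.1 i.2 i.2.isLt)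
    have hcard : (blockM A U V).rank = Fintype.card ((n : Fin N) × Fin (U n)) := by simpa
    exact congrFun (Matrix.eq_zero_of_mulVec_eq_zero_of_rank_eq_card hcard hker) ⟨n, j, hj⟩
  · exact coeff_eq_zero_of_natDegree_lt ((hU n).trans_le hj)

lemma exists_le_sum_eq {ι : Type*} [Fintype ι] [DecidableEq ι] (b : ι → ℕ) {S : ℕ}
    (hS : S ≤ ∑ i, b i) : ∃ V ≤ b, ∑ i, V i = S := by
  induction S with
  | zero => exact ⟨0, zero_le, by simp⟩
  | succ S ih =>
    obtain ⟨V, hVb, hVS⟩ := ih (Nat.le_of_succ_le hS)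
    obtain ⟨i₀, hi₀⟩ : ∃ i, V i < b i := by
      by_contra! hbV
      have := Finset.sum_le_sum fun i (_ : i ∈ Finset.univ) => hbV i
      omega
    refine ⟨V + Pi.single i₀ 1, fun i => ?_, ?_⟩
    · rcases eq_or_ne i i₀ with rfl | hi
      · simpa using hi₀
      · simpa [hi] using hVb i
    · simp [Finset.sum_add_distrib, hVS]

lemma Nat.exists_forall_lt_eq_zero_and_ne_zero {R : Type*} [Zero R] (f : ℕ → R) (S : ℕ) :
    ∃ c, (∀ i < c, f i = 0) ∧ (c < S → f c ≠ 0) := by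
  classical
  set P : ℕ → Prop := fun c => ∀ i < c, f i = 0
  have hspec : P (Nat.findGreatest P S) :=
    Nat.findGreatest_spec (P := P) (Nat.zero_le S) fun i hi => absurd hi i.not_lt_zero
  refine ⟨Nat.findGreatest P S, hspec, fun hlt hzero => ?_⟩
  refine Nat.findGreatest_is_greatest (Nat.lt_succ_self _) hlt fun i hi => ?_
  rcases Nat.lt_succ_iff_lt_or_eq.mp hi with hi | rfl
  exacts [hspec i hi, hzero]

/-- if every square matrix `M_{U₁,…,U_N;V₁,…,V_M}(A)` with
`U₁+⋯+U_N = V₁+⋯+V_M` is nonsingular (i.e. has full rank), then `A` is strongly badly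
approximable. -/
theorem sba_of_all_square_blocks_nonsingular {K : Type*} [Field K] {M N : ℕ}
    (A : Matrix (Fin M) (Fin N) (LaurentSeries K))
    (h : ∀ (U : Fin N → ℕ) (V : Fin M → ℕ), (∑ n, U n) = (∑ m, V m) →
      (blockM A U V).rank = ∑ n, U n) :
    StronglyBadlyApproximable A := by
  refine ⟨M + N + 1, by positivity, fun ξ hξ => ?_⟩
  set F : Fin M → LaurentSeries K := fun m => ∑ n, A m n * toL (ξ n)
  set S := ∑ n, ((ξ n).natDegree + 1)
  choose c hvanish hnonzero using fun m =>
    Nat.exists_forall_lt_eq_zero_and_ne_zero (fun i : ℕ => (F m).coeff ((i : ℤ) + 1)) S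
  have hc : ∑ m, c m < S := by
    by_contra! hle
    obtain ⟨V, hVc, hVS⟩ := exists_le_sum_eq c hle
    obtain ⟨m, i, hiV, hi⟩ :=
      exists_coeff_ne_zero_of_blockM_rank_eq A (h _ V hVS.symm) hξ fun n => Nat.lt_succ_self _
    exact hi (hvanish m i (hiV.trans_le (hVc m)))
  have hnormL (m : Fin M) : Real.exp (-((c m : ℝ) + 1)) ≤ normL (F m) := by
    have hcm : c m < S :=
      (Finset.single_le_sum (fun _ _ => zero_le) (Finset.mem_univ m)).trans_lt hc
    exact_mod_cast exp_neg_le_normL (by positivity) (hnonzero m hcm)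
  have hdeg : (∑ m, (c m : ℝ)) + 1 ≤ ∑ n, ((ξ n).natDegree : ℝ) + N := by
    have : ∑ m, c m + 1 ≤ ∑ n, (ξ n).natDegree + N := by
      simpa [S, Finset.sum_add_distrib] using hc
    exact_mod_cast this
  calc Real.exp (-(M + N + 1))
      < Real.exp (-∑ m, ((c m : ℝ) + 1)) * Real.exp (∑ n, ((ξ n).natDegree : ℝ)) := by
        rw [← Real.exp_add, Real.exp_lt_exp, Finset.sum_add_distrib]
        simp only [Finset.sum_const, Finset.card_univ, Fintype.card_fin, nsmul_eq_mul, mul_one]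
        linarith
    _ = (∏ m, Real.exp (-((c m : ℝ) + 1))) * ∏ n, max (absL (toL (ξ n))) 1 := by
        simp only [max_absL_toL_one, ← Real.exp_sum, Finset.sum_neg_distrib]
    _ ≤ (∏ m, normL (F m)) * ∏ n, max (absL (toL (ξ n))) 1 := by
        gcongr with m
        exact hnormL m
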